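/- If a part of λ is repeated, λ_i = λ_{i+1} = ⋯ = λ_j, then in every admissible state of the colored model the colored lines entering through the top in the corresponding consecutive columns must pairwise cross; consequently, if the ensemble S_{z,λ,w} is nonempty then w is the shortest element of its coset wW_λ in W/W_λ, where W_λ is the stabilizer of λ. -/

import Mathlib

abbrev LP (r : ℕ) := AddMonoidAlgebra ℚ (Fin r → ℤ)

noncomputable def mono {r : ℕ} (μ : Fin r → ℤ) : LP r :=
  AddMonoidAlgebra.ofCoeff (Finsupp.single μ (1 : ℚ))

/-- The simple reflection `s_i` of `S_r`, swapping `i` and `i+1` (0-based). -/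
def sPerm (r i : ℕ) : Equiv.Perm (Fin r) :=
  if h : i + 1 < r then Equiv.swap ⟨i, Nat.lt_of_succ_lt h⟩ ⟨i + 1, h⟩ else 1

/-- The simple root `α_i = e_i - e_{i+1}`. -/
def alph (r i : ℕ) : Fin r → ℤ :=
  if h : i + 1 < r then Pi.single ⟨i, Nat.lt_of_succ_lt h⟩ 1 - Pi.single ⟨i + 1, h⟩ 1 else 0

/-- The pairing `⟨μ, α_i^∨⟩ = μ_i - μ_{i+1}`. -/
def pair (r i : ℕ) (μ : Fin r → ℤ) : ℤ :=
  if h : i + 1 < r then μ ⟨i, Nat.lt_of_succ_lt h⟩ - μ ⟨i + 1, h⟩ else 0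

/-- The isobaric Demazure operator `∂_i` on the monomial `z^μ`, given by the standard
explicit formula equivalent to `∂_i f(z) = (f(z) - z^{-α_i} f(s_i z))/(1 - z^{-α_i})`. -/
noncomputable def demMono (r i : ℕ) (μ : Fin r → ℤ) : LP r :=
  if 0 ≤ pair r i μ then ∑ t ∈ Finset.range ((pair r i μ).toNat + 1), mono (μ - t • alph r i)
  else if pair r i μ = -1 then 0
  else -∑ t ∈ Finset.range ((-pair r i μ).toNat - 1), mono (μ + (t + 1) • alph r i)

/-- The isobaric Demazure operator `∂_i` on Laurent polynomials, extended linearly. -/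
noncomputable def dem (r i : ℕ) (f : LP r) : LP r :=
  Finsupp.sum f.coeff fun μ c => c • demMono r i μ

/-- The modified Demazure operator `∂°_i = ∂_i - 1`. -/
noncomputable def demC (r i : ℕ) (f : LP r) : LP r := dem r i f - f

/-- The action of `s_i` on Laurent polynomials: `(s_i f)(z) = f(s_i z)`. -/
noncomputable def sAct (r i : ℕ) (f : LP r) : LP r :=
  AddMonoidAlgebra.ofCoeff (Finsupp.mapDomain (fun μ => μ ∘ (sPerm r i)) f.coeff)

/-- `∂_w = ∂_{i_1} ⋯ ∂_{i_k}` along a word `(i_1, …, i_k)`. -/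
noncomputable def demWord (r : ℕ) : List ℕ → LP r → LP r
  | [], f => f
  | i :: l, f => dem r i (demWord r l f)

/-- `∂°_w = ∂°_{i_1} ⋯ ∂°_{i_k}` along a word `(i_1, …, i_k)`. -/
noncomputable def demCWord (r : ℕ) : List ℕ → LP r → LP r
  | [], f => f
  | i :: l, f => demC r i (demCWord r l f)

/-- All letters of the word are valid indices of simple reflections of `S_r`. -/
def OKWord (r : ℕ) (l : List ℕ) : Prop := ∀ i ∈ l, i + 1 < r

def wordProd (r : ℕ) (l : List ℕ) : Equiv.Perm (Fin r) := (l.map (sPerm r)).prod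

/-- Coxeter length of a permutation. -/
noncomputable def len (r : ℕ) (w : Equiv.Perm (Fin r)) : ℕ :=
  sInf {n | ∃ l : List ℕ, OKWord r l ∧ wordProd r l = w ∧ l.length = n}

/-- `l` is a reduced word. -/
def Reduced (r : ℕ) (l : List ℕ) : Prop :=
  OKWord r l ∧ l.length = len r (wordProd r l)

/-- Bruhat order on `S_r`, via the subword characterization. -/
def bruhatLE (r : ℕ) (y w : Equiv.Perm (Fin r)) : Prop :=
  ∃ l : List ℕ, Reduced r l ∧ wordProd r l = w ∧
    ∃ l' : List ℕ, l'.Sublist l ∧ wordProd r l' = y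

/-- The Young diagram of a partition `λ` with at most `r` parts. -/
noncomputable def lamDiag {r : ℕ} (lam : Fin r → ℕ)
    (h : (List.ofFn lam).Pairwise (· ≥ ·)) : YoungDiagram :=
  YoungDiagram.ofRowLens (List.ofFn lam) (List.sortedGE_iff_pairwise.mpr h)

/-- The number of entries `< m` in row `j` of the tableau `T`; since rows weakly
increase, this is the length of row `j` of the tableau obtained from `T` by deleting
all entries `≥ m`. -/
def cntLt {μ : YoungDiagram} (T : SemistandardYoungTableau μ) (j m : ℕ) : ℕ :=
  ((Finset.range (μ.rowLen j)).filter (fun k => T j k < m)).card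

/-- The weight of a tableau: `wtT T m` is the number of entries equal to `m`.
(Entries are 0-based: the letter `m ∈ {0, …, r-1}` corresponds to `m+1 ∈ {1, …, r}`.) -/
def wtT {μ : YoungDiagram} (T : SemistandardYoungTableau μ) (m : ℕ) : ℕ :=
  (μ.cells.filter (fun c => T c.1 c.2 = m)).card

/-- A Gelfand-Tsetlin pattern with `r` rows and top row `λ`: a triangular array
`(a i j)`, rows `i = 0, …, r-1` (from the top), with `a i j` defined for
`i ≤ j ≤ r-1` (and normalized to `0` outside the triangle), top row `λ`, and the
interlacing inequalities `a i j ≥ a (i+1) (j+1) ≥ a i (j+1)`. -/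
structure GTPattern (r : ℕ) (lam : Fin r → ℕ) where
  a : ℕ → ℕ → ℕ
  top : ∀ j : Fin r, a 0 (j : ℕ) = lam j
  interlace : ∀ i j : ℕ, i ≤ j → j + 1 < r →
    a (i + 1) (j + 1) ≤ a i j ∧ a i (j + 1) ≤ a (i + 1) (j + 1)
  outside : ∀ i j : ℕ, ¬(i ≤ j ∧ j < r) → a i j = 0

/-- The sum of the `i`-th row of a Gelfand-Tsetlin pattern. -/
def GTPattern.rowSum {r : ℕ} {lam : Fin r → ℕ} (P : GTPattern r lam) (i : ℕ) : ℕ :=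
  ∑ j ∈ Finset.Ico i r, P.a i j

/-- `true` = spin −, `false` = spin +.  The admissible five-vertex configurations
`(left, top, right, bottom)`: spin is conserved, and the type-`b₁` configuration
`(+,−,+,−)` is forbidden.  This leaves exactly the five configurations
`(+,+,+,+)`, `(−,−,−,−)`, `(−,+,−,+)`, `(−,+,+,−)`, `(+,−,−,+)`. -/
def admU (a b c d : Bool) : Prop :=
  ((if a then 1 else 0) + (if b then 1 else 0) : ℕ)
      = (if c then 1 else 0) + (if d then 1 else 0) ∧
  ¬(a = false ∧ b = true ∧ c = false ∧ d = true)

/-- A state of the uncolored five-vertex model `S_{z,λ}`: a grid with rows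
`0, …, r-1` (top to bottom) and columns labeled `0, …, N` from *right to left*.
`V i j` is the spin on the vertical edge in column (label) `j` between row `i-1`
and row `i` (`V 0` is the top boundary, `V r` the bottom); `H i k` is the spin on
the `k`-th horizontal edge of row `i`, counted from the left (`H i 0` is the left
boundary, `H i (N+1)` the right boundary).  The vertex of row `i` and column label
`j` has left edge `H i (N-j)`, top edge `V i j`, right edge `H i (N-j+1)` and
bottom edge `V (i+1) j`.  Boundary conditions: the top boundary has `−` exactly in
the columns labeled `λ_i + r - 1 - i` (0-based `i`), the left and bottom boundary
are `+`, the right boundary is `−`. -/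
structure UState (r N : ℕ) (lam : Fin r → ℕ) where
  V : Fin (r + 1) → Fin (N + 1) → Bool
  H : Fin r → Fin (N + 2) → Bool
  top : ∀ j : Fin (N + 1), V 0 j = true ↔ ∃ i : Fin r, (j : ℕ) = lam i + (r - 1 - (i : ℕ))
  bottom : ∀ j, V (Fin.last r) j = false
  left : ∀ i, H i 0 = false
  right : ∀ i, H i (Fin.last (N + 1)) = true
  adm : ∀ (i : Fin r) (j : Fin (N + 1)),
    admU (H i ⟨N - (j : ℕ), by omega⟩) (V i.castSucc j)
      (H i ⟨N - (j : ℕ) + 1, by omega⟩) (V i.succ j)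

/-- The Boltzmann weight of a state: a vertex in row `i` contributes `z_i` exactly
when the spin on the edge to its left is `−`, otherwise `1`. -/
noncomputable def uweight {r N : ℕ} {lam : Fin r → ℕ} (s : UState r N lam) : LP r :=
  ∏ i : Fin r, ∏ k : Fin (N + 1),
    if s.H i k.castSucc then mono (Pi.single i 1) else 1

/-- The partition function of the uncolored five-vertex model. -/
noncomputable def Zpart (r N : ℕ) (lam : Fin r → ℕ) : LP r :=
  ∑ᶠ s : UState r N lam, uweight s

/-- The Weyl vector `ρ = (r-1, r-2, …, 0)`. -/
def rhoWt (r : ℕ) : Fin r → ℤ := fun i => ((r - 1 - (i : ℕ) : ℕ) : ℤ)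

/-- The Schur polynomial `s_λ(z_1, …, z_r)` as a Laurent polynomial, via its
combinatorial definition: the sum of `z^{wt T}` over semistandard Young tableaux of
shape `λ` with entries in `{1, …, r}` (0-based: entries `< r`). -/
noncomputable def schurL (r : ℕ) (μ : YoungDiagram) : LP r :=
  ∑ᶠ T : {T : SemistandardYoungTableau μ // ∀ c ∈ μ.cells, T.1 c.1 c.2 < r},
    mono fun i => (wtT T.1 (i : ℕ) : ℤ)

/-- Colored spins: `none` is the spin `+`, and `some c` is a `−` spin carrying the
colour `c_{c+1}` (0-based `c`); the colours are ordered `c_1 > c_2 > ⋯ > c_r`, so a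
*smaller* index means a *larger* colour.  Admissible colored configurations
`(left, top, right, bottom)`: type `a₁` (all `+`); type `a₂` (left and top colored,
the larger colour exits right and the smaller colour exits bottom — in indices,
right is the `min` and bottom is the `max`); types `b₂`/`c₁` (colored path entering
on the left and exiting right or bottom); type `c₂` (entering on top and exiting
right).  The type-`b₁` configuration (entering on top and exiting bottom with `+`
horizontally) is forbidden, as is everything else. -/
def admC (r : ℕ) (a b c d : Option (Fin r)) : Prop :=
  (a = none ∧ b = none ∧ c = none ∧ d = none) ∨
  (∃ x y : Fin r, a = some x ∧ b = some y ∧ c = some (min x y) ∧ d = some (max x y)) ∨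
  (∃ x : Fin r, a = some x ∧ b = none ∧
    ((c = some x ∧ d = none) ∨ (c = none ∧ d = some x))) ∨
  (∃ x : Fin r, a = none ∧ b = some x ∧ c = some x ∧ d = none)

/-- A state of the colored five-vertex model `S_{z,λ,w}`; grid coordinates as in the
uncolored model.  Boundary conditions: the top boundary carries colour `c_{i+1}`
(i.e. `some i`) exactly in the column labeled `λ_i + r - 1 - i` (0-based `i`); the
right boundary carries, from top to bottom, the colours `w c` (row `i` carries
`some (w⁻¹ i)`); all other boundary edges are `+`. -/
structure CState (r N : ℕ) (lam : Fin r → ℕ) (w : Equiv.Perm (Fin r)) where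
  V : Fin (r + 1) → Fin (N + 1) → Option (Fin r)
  H : Fin r → Fin (N + 2) → Option (Fin r)
  top : ∀ (i : Fin r) (j : Fin (N + 1)),
    V 0 j = some i ↔ (j : ℕ) = lam i + (r - 1 - (i : ℕ))
  bottom : ∀ j, V (Fin.last r) j = none
  left : ∀ i, H i 0 = none
  right : ∀ i : Fin r, H i (Fin.last (N + 1)) = some (w⁻¹ i)
  adm : ∀ (i : Fin r) (j : Fin (N + 1)),
    admC r (H i ⟨N - (j : ℕ), by omega⟩) (V i.castSucc j)
      (H i ⟨N - (j : ℕ) + 1, by omega⟩) (V i.succ j)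

/-- The Boltzmann weight of a colored state: a vertex in row `i` contributes `z_i`
exactly when the edge to its left is colored, otherwise `1`. -/
noncomputable def cweight {r N : ℕ} {lam : Fin r → ℕ} {w : Equiv.Perm (Fin r)}
    (s : CState r N lam w) : LP r :=
  ∏ i : Fin r, ∏ k : Fin (N + 1),
    if (s.H i k.castSucc).isSome then mono (Pi.single i 1) else 1

/-- The partition function of the colored five-vertex model `S_{z,λ,w}`. -/
noncomputable def Zcol (r N : ℕ) (lam : Fin r → ℕ) (w : Equiv.Perm (Fin r)) : LP r :=
  ∑ᶠ s : CState r N lam w, cweight s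


/-! Colour `c` leaves the grid through the right boundary in row `w c`, and a line moves only
right or down, so in each row it either turns down or exits. At an a₂ vertex the larger colour
`c` (smaller index) comes from the left and leaves to the right, so afterwards `c` runs to the
right of `d` and, a crossing needing the larger colour on the left, `d` never gets past it
again: `c` exits first, `w c < w d`. Equal parts put consecutive colours `c`, `c + 1` in adjacent
top columns, `c` just left of `c + 1`; while `c` turns down it forces `c + 1` down beside it,
so eventually `c` runs into the vertex of `c + 1` and they cross. Hence `w` increases on each
block of equal parts. Then two lines `a < b` of a block cross: `a` starts left of `b` and
exits above it, so `b` cannot exit while `a` is still to its left, and `a` has to run into the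
vertex of `b`. Finally `len` is the number of inversions, and `(a, b) ↦ (v⁻¹ a, v⁻¹ b)` maps
the inversions of `w` injectively to those of `w * v` when `v` preserves `λ`. -/

lemma Fin.val_orderSucc_of_not_isMax {r : ℕ} {a : Fin r} (ha : ¬IsMax a) :
    ((Order.succ a : Fin r) : ℕ) = a + 1 :=
  (Nat.covBy_iff_add_one_eq.1 (Fin.covBy_iff.1 (Order.covBy_succ_of_not_isMax ha))).symm

section Inversions

variable {r : ℕ}

def inversions (u : Equiv.Perm (Fin r)) : Finset (Fin r × Fin r) :=
  {p | p.1 < p.2 ∧ u p.2 < u p.1}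

lemma mem_inversions {u : Equiv.Perm (Fin r)} {p : Fin r × Fin r} :
    p ∈ inversions u ↔ p.1 < p.2 ∧ u p.2 < u p.1 := by
  simp [inversions]

lemma inversions_one : inversions (1 : Equiv.Perm (Fin r)) = ∅ :=
  Finset.eq_empty_of_forall_notMem fun _ hp => (mem_inversions.1 hp).1.asymm (mem_inversions.1 hp).2

lemma sPerm_mul_self (m : ℕ) : sPerm r m * sPerm r m = 1 := by
  unfold sPerm
  split_ifs <;> simp

lemma wordProd_cons (m : ℕ) (l : List ℕ) : wordProd r (m :: l) = sPerm r m * wordProd r l := by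
  simp [wordProd]

lemma sPerm_lt_sPerm {m : ℕ} {x y : Fin r} (h : x < y)
    (hxy : ¬((x : ℕ) = m ∧ (y : ℕ) = m + 1)) : sPerm r m x < sPerm r m y := by
  unfold sPerm
  split_ifs
  · simp only [Equiv.swap_apply_def, Fin.ext_iff]
    rw [Fin.lt_def] at h
    split_ifs <;> simp only [Fin.lt_def] <;> omega
  · exact h

lemma mem_inversions_of_mem_inversions_sPerm_mul {m : ℕ} (hm : m + 1 < r)
    {u : Equiv.Perm (Fin r)} {p : Fin r × Fin r} (hp : p ∈ inversions (sPerm r m * u)) :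
    p ∈ inversions u ∨ p = (u⁻¹ ⟨m, by omega⟩, u⁻¹ ⟨m + 1, hm⟩) := by
  rw [mem_inversions] at hp ⊢
  by_contra! h
  have hlt : u p.1 < u p.2 := (h.1 hp.1).lt_of_ne (u.injective.ne hp.1.ne)
  refine (sPerm_lt_sPerm hlt fun ⟨h₁, h₂⟩ => h.2 (Prod.ext ?_ ?_)).not_gt hp.2 <;>
    exact Equiv.Perm.eq_inv_iff_eq.2 (Fin.ext (by assumption))

lemma card_inversions_sPerm_mul_le (m : ℕ) (u : Equiv.Perm (Fin r)) :
    (inversions (sPerm r m * u)).card ≤ (inversions u).card + 1 := by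
  by_cases hm : m + 1 < r
  · refine (Finset.card_le_card (t := insert (u⁻¹ ⟨m, by omega⟩, u⁻¹ ⟨m + 1, hm⟩)
      (inversions u)) fun p hp => ?_).trans (Finset.card_insert_le _ _)
    rcases mem_inversions_of_mem_inversions_sPerm_mul hm hp with h | rfl
    · exact Finset.mem_insert_of_mem h
    · exact Finset.mem_insert_self _ _
  · simp [sPerm, hm]

lemma card_inversions_sPerm_mul_lt {m : ℕ} (hm : m + 1 < r) {u : Equiv.Perm (Fin r)}
    (hdes : u⁻¹ ⟨m + 1, hm⟩ < u⁻¹ ⟨m, by omega⟩) :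
    (inversions (sPerm r m * u)).card < (inversions u).card := by
  set p₀ : Fin r × Fin r := (u⁻¹ ⟨m + 1, hm⟩, u⁻¹ ⟨m, by omega⟩)
  have hp₀ : p₀ ∈ inversions u := mem_inversions.2 ⟨hdes, by simp [p₀, Fin.lt_def]⟩
  refine (Finset.card_le_card (t := (inversions u).erase p₀) fun p hp => ?_).trans_lt
    (Finset.card_erase_lt_of_mem hp₀)
  rcases mem_inversions_of_mem_inversions_sPerm_mul hm hp with h | rfl
  · refine Finset.mem_erase.2 ⟨?_, h⟩
    rintro rfl
    have := (mem_inversions.1 hp).2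
    simp [p₀, sPerm, hm, Fin.lt_def] at this
  · exact absurd hdes (mem_inversions.1 hp).1.not_gt

lemma exists_inv_descent {u : Equiv.Perm (Fin r)} (hu : u ≠ 1) :
    ∃ (m : ℕ) (hm : m + 1 < r), u⁻¹ ⟨m + 1, hm⟩ < u⁻¹ ⟨m, by omega⟩ := by
  by_contra! h
  refine hu (inv_eq_one.1 (Equiv.ext fun x => (strictMono_of_lt_succ fun a ha => ?_).apply_eq))
  have hsucc := Fin.val_orderSucc_of_not_isMax ha
  refine lt_of_le_of_ne ?_ (u⁻¹.injective.ne (Order.lt_succ_of_not_isMax ha).ne)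
  convert h a (hsucc ▸ (Order.succ a).isLt)

lemma card_inversions_wordProd_le (l : List ℕ) :
    (inversions (wordProd r l)).card ≤ l.length := by
  induction l with
  | nil => simp [wordProd, inversions_one]
  | cons m l ih =>
    rw [wordProd_cons, List.length_cons]
    exact (card_inversions_sPerm_mul_le m _).trans (Nat.add_le_add_right ih 1)

lemma exists_word_length_eq_card_inversions (u : Equiv.Perm (Fin r)) :
    ∃ l, OKWord r l ∧ wordProd r l = u ∧ l.length = (inversions u).card := by
  induction hn : (inversions u).card using Nat.strong_induction_on generalizing u with
  | _ n ih =>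
  by_cases hu : u = 1
  · subst hu
    exact ⟨[], by simp [OKWord], rfl, by simp [← hn, inversions_one]⟩
  obtain ⟨m, hm, hdes⟩ := exists_inv_descent hu
  have hlt := card_inversions_sPerm_mul_lt hm hdes
  have hle := card_inversions_sPerm_mul_le m (sPerm r m * u)
  rw [← mul_assoc, sPerm_mul_self, one_mul] at hle
  obtain ⟨l, hl, hprod, hlen⟩ := ih _ (hn ▸ hlt) _ rfl
  refine ⟨m :: l, List.forall_mem_cons.2 ⟨hm, hl⟩, ?_, by simp only [List.length_cons]; omega⟩
  rw [wordProd_cons, hprod, ← mul_assoc, sPerm_mul_self, one_mul]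

lemma len_eq_card_inversions (u : Equiv.Perm (Fin r)) : len r u = (inversions u).card := by
  obtain ⟨l, hl, hprod, hlen⟩ := exists_word_length_eq_card_inversions u
  refine le_antisymm (Nat.sInf_le ⟨l, hl, hprod, hlen⟩) (le_csInf ⟨_, l, hl, hprod, hlen⟩ ?_)
  rintro _ ⟨l', -, rfl, rfl⟩
  exact card_inversions_wordProd_le l'

lemma len_le_len_mul_of_stabilizer {α : Type*} [PartialOrder α] {lam : Fin r → α}
    (hlam : Antitone lam) {w : Equiv.Perm (Fin r)}
    (hw : ∀ a b, a < b → lam a = lam b → w a < w b) {v : Equiv.Perm (Fin r)}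
    (hv : ∀ k, lam (v k) = lam k) : len r w ≤ len r (w * v) := by
  rw [len_eq_card_inversions, len_eq_card_inversions]
  refine Finset.card_le_card_of_injOn (fun p => (v⁻¹ p.1, v⁻¹ p.2)) (fun p hp => ?_)
    (fun p _ q _ h => Prod.ext (v⁻¹.injective (congrArg Prod.fst h))
      (v⁻¹.injective (congrArg Prod.snd h)))
  obtain ⟨h12, hw21⟩ := mem_inversions.1 hp
  have hv' : ∀ k, lam (v⁻¹ k) = lam k := fun k => by simpa using (hv (v⁻¹ k)).symm
  refine mem_inversions.2 ⟨lt_of_not_ge fun h21 => ?_, by simpa using hw21⟩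
  have heq : lam p.1 = lam p.2 := le_antisymm (hv' p.1 ▸ hv' p.2 ▸ hlam h21) (hlam h12.le)
  exact (hw _ _ h12 heq).asymm hw21

end Inversions

namespace admC

variable {r : ℕ} {L T R B : Option (Fin r)} {c : Fin r}

lemma top_exits (h : admC r L T R B) (hT : T = some c) : R = some c ∨ B = some c := by
  rcases h with ⟨-, rfl, -⟩ | ⟨x, y, -, rfl, rfl, rfl⟩ | ⟨x, -, rfl, -⟩ | ⟨x, -, rfl, rfl, -⟩
  · simp at hT
  · cases hT
    rcases le_total x c with hxc | hcx
    · exact Or.inr (by rw [max_eq_right hxc])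
    · exact Or.inl (by rw [min_eq_right hcx])
  · simp at hT
  · exact Or.inl hT

lemma left_exits (h : admC r L T R B) (hL : L = some c) : R = some c ∨ B = some c := by
  rcases h with ⟨rfl, -⟩ | ⟨x, y, rfl, -, rfl, rfl⟩ | ⟨x, rfl, -, h⟩ | ⟨x, rfl, -⟩
  · simp at hL
  · cases hL
    rcases le_total c y with hcy | hyc
    · exact Or.inl (by rw [min_eq_left hcy])
    · exact Or.inr (by rw [max_eq_left hyc])
  · cases hL
    exact h.imp And.left And.right
  · simp at hL

lemma cross {x y : Fin r} (h : admC r L T R B) (hL : L = some x) (hT : T = some y) :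
    R = some (min x y) ∧ B = some (max x y) := by
  rcases h with ⟨rfl, -⟩ | ⟨x, y, rfl, rfl, rfl, rfl⟩ | ⟨x, -, rfl, -⟩ | ⟨x, rfl, -⟩
  · simp at hL
  · cases hL; cases hT; exact ⟨rfl, rfl⟩
  · simp at hT
  · simp at hL

lemma right_le_top {z : Fin r} (h : admC r L T R B) (hT : T = some c) (hR : R = some z) :
    z ≤ c := by
  rcases h with ⟨-, rfl, -⟩ | ⟨x, y, -, rfl, rfl, -⟩ | ⟨x, -, rfl, -⟩ | ⟨x, -, rfl, rfl, -⟩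
  · simp at hT
  · cases hT; cases hR; exact min_le_right _ _
  · simp at hT
  · cases hT; cases hR; exact le_rfl

lemma exists_right_of_top_eq_bottom (h : admC r L T R B) (hT : T = some c)
    (hB : B = some c) : ∃ z, R = some z := by
  rcases h with ⟨-, rfl, -⟩ | ⟨x, y, -, -, rfl, -⟩ | ⟨x, -, rfl, -⟩ | ⟨x, -, -, -, rfl⟩
  · simp at hT
  · exact ⟨_, rfl⟩
  · simp at hT
  · simp at hB

end admC

def topCol {r : ℕ} (lam : Fin r → ℕ) (c : Fin r) : ℕ := lam c + (r - 1 - c)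

lemma topCol_lt_topCol {r : ℕ} {lam : Fin r → ℕ} (hlam : Antitone lam) {a b : Fin r}
    (hab : a < b) : topCol lam b < topCol lam a := by
  have := hlam hab.le
  have := b.isLt
  rw [Fin.lt_def] at hab
  unfold topCol
  omega

namespace CState

variable {r N : ℕ} {lam : Fin r → ℕ} {w : Equiv.Perm (Fin r)} (s : CState r N lam w)

/- The edges in `ℕ` coordinates, `+` outside the grid: `vEdge t j` is the top edge of the vertex
in row `t` and column `j`, and `hEdge t j` the edge just right of it, so `hEdge t (j + 1)` is its
left edge and `hEdge t 0` the right boundary. Every vertex of `ℕ × ℕ` is then admissible. -/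

def vEdge (t j : ℕ) : Option (Fin r) :=
  if h : t < r + 1 ∧ j < N + 1 then s.V ⟨t, h.1⟩ ⟨j, h.2⟩ else none

def hEdge (t j : ℕ) : Option (Fin r) :=
  if h : t < r ∧ j < N + 2 then s.H ⟨t, h.1⟩ ⟨N + 1 - j, by omega⟩ else none

def Crosses (c d : Fin r) : Prop :=
  ∃ t j, s.hEdge t (j + 1) = some c ∧ s.vEdge t j = some d

variable {s}

lemma vEdge_of_le {t : ℕ} (ht : r ≤ t) (j : ℕ) : s.vEdge t j = none := by
  unfold vEdge
  split_ifs with h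
  · rw [show (⟨t, h.1⟩ : Fin (r + 1)) = Fin.last r from Fin.ext (by simp; omega), s.bottom]
  · rfl

lemma hEdge_of_le {j : ℕ} (t : ℕ) (hj : N + 1 ≤ j) : s.hEdge t j = none := by
  unfold hEdge
  split_ifs with h
  · rw [show (⟨N + 1 - j, _⟩ : Fin (N + 2)) = 0 from Fin.ext (by simp; omega), s.left]
  · rfl

lemma lt_of_vEdge_eq_some {t j : ℕ} {c : Fin r} (h : s.vEdge t j = some c) : t < r := by
  by_contra! ht
  simp [vEdge_of_le ht] at h

lemma vEdge_zero_topCol {c : Fin r} (hc : topCol lam c ≤ N) :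
    s.vEdge 0 (topCol lam c) = some c := by
  simp only [vEdge, show 0 < r + 1 by omega, Nat.lt_succ_of_le hc, and_self, dif_pos]
  exact (s.top c _).2 rfl

lemma hEdge_zero {t : ℕ} (ht : t < r) : s.hEdge t 0 = some (w⁻¹ ⟨t, ht⟩) := by
  simp only [hEdge, ht, true_and, show 0 < N + 2 by omega, dif_pos]
  exact s.right _

lemma exit_eq_of_hEdge_zero {t : ℕ} {c : Fin r} (h : s.hEdge t 0 = some c) :
    (w c : ℕ) = t := by
  have ht : t < r := by
    by_contra ht
    simp [hEdge, ht] at h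
  rw [hEdge_zero ht, Option.some_inj] at h
  simp [← h]

lemma admC_vEdge_hEdge (t j : ℕ) :
    admC r (s.hEdge t (j + 1)) (s.vEdge t j) (s.hEdge t j) (s.vEdge (t + 1) j) := by
  by_cases hin : t < r ∧ j < N + 1
  · obtain ⟨ht, hj⟩ := hin
    simp only [hEdge, vEdge, ht, hj, show t < r + 1 by omega, show t + 1 < r + 1 by omega,
      show j + 1 < N + 2 by omega, show j < N + 2 by omega, and_self, dif_pos]
    convert s.adm ⟨t, ht⟩ ⟨j, hj⟩ using 3 <;> simp; omega
  · have hH : s.hEdge t (j + 1) = none ∧ s.hEdge t j = none := by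
      rcases not_and_or.1 hin with ht | hj
      · simp [hEdge, ht]
      · exact ⟨hEdge_of_le t (by omega), hEdge_of_le t (by omega)⟩
    have hV : ∀ t' ≥ t, s.vEdge t' j = none := fun t' ht' => by
      rcases not_and_or.1 hin with ht | hj
      · exact vEdge_of_le (by omega) j
      · simp [vEdge, hj]
    rw [hH.1, hH.2, hV t le_rfl, hV (t + 1) (by omega)]
    exact Or.inl ⟨rfl, rfl, rfl, rfl⟩

lemma descends_or_reaches_of_hEdge {t j j' : ℕ} {c : Fin r} (h : s.hEdge t j = some c)
    (hj : j' ≤ j) :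
    (∃ i, j' ≤ i ∧ i < j ∧ s.vEdge (t + 1) i = some c) ∨ s.hEdge t j' = some c := by
  induction j, hj using Nat.le_induction with
  | base => exact Or.inr h
  | succ j hj ih =>
    rcases admC.left_exits (s.admC_vEdge_hEdge t j) h with hR | hB
    · exact (ih hR).imp (fun ⟨i, h₁, h₂, h₃⟩ => ⟨i, h₁, by omega, h₃⟩) id
    · exact Or.inl ⟨j, hj, by omega, hB⟩

lemma descends_or_reaches_of_vEdge {t j j' : ℕ} {c : Fin r} (h : s.vEdge t j = some c)
    (hj : j' ≤ j) :
    (∃ i, j' ≤ i ∧ i ≤ j ∧ s.vEdge (t + 1) i = some c) ∨ s.hEdge t j' = some c := by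
  rcases admC.top_exits (s.admC_vEdge_hEdge t j) h with hR | hB
  · exact (descends_or_reaches_of_hEdge hR hj).imp
      (fun ⟨i, h₁, h₂, h₃⟩ => ⟨i, h₁, h₂.le, h₃⟩) id
  · exact Or.inl ⟨j, hj, le_rfl, hB⟩

lemma descends_or_exits {t j : ℕ} {c : Fin r} (h : s.vEdge t j = some c) :
    (∃ i ≤ j, s.vEdge (t + 1) i = some c) ∨ (w c : ℕ) = t :=
  (descends_or_reaches_of_vEdge h (Nat.zero_le j)).imp
    (fun ⟨i, _, hi, hB⟩ => ⟨i, hi, hB⟩) exit_eq_of_hEdge_zero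

lemma le_exit_of_vEdge {t j : ℕ} {c : Fin r} (h : s.vEdge t j = some c) : t ≤ w c := by
  have ht := lt_of_vEdge_eq_some h
  rcases descends_or_exits h with ⟨i, -, hB⟩ | hw
  · exact (le_exit_of_vEdge hB).trans' t.le_succ
  · exact hw.ge
termination_by r - t

lemma exits_before_of_right {t jc jd : ℕ} {c d : Fin r} (hcd : c < d)
    (hc : s.vEdge t jc = some c) (hd : s.vEdge t jd = some d) (hj : jc < jd) : w c < w d := by
  have ht := lt_of_vEdge_eq_some hc
  -- `d` cannot run through the vertex below `c`: its right edge carries a colour `≤ c`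
  obtain ⟨jd', hjd', hBd⟩ : ∃ i, jc ≤ i ∧ s.vEdge (t + 1) i = some d := by
    rcases descends_or_reaches_of_vEdge hd hj.le with ⟨i, h₁, -, h₃⟩ | hR
    · exact ⟨i, h₁, h₃⟩
    · exact absurd (admC.right_le_top (s.admC_vEdge_hEdge t jc) hc hR) hcd.not_ge
  rcases descends_or_exits hc with ⟨jc', hjc', hBc⟩ | hw
  · have hne : jc' ≠ jd' := by
      rintro rfl
      exact hcd.ne (Option.some_inj.1 (hBc.symm.trans hBd))
    exact exits_before_of_right hcd hBc hBd (by omega)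
  · have := le_exit_of_vEdge hBd
    rw [Fin.lt_def]
    omega
termination_by r - t

lemma Crosses.exits_before {c d : Fin r} (h : s.Crosses c d) (hcd : c < d) : w c < w d := by
  obtain ⟨t, j, hL, hT⟩ := h
  obtain ⟨hR, hB⟩ := admC.cross (s.admC_vEdge_hEdge t j) hL hT
  rw [min_eq_left hcd.le] at hR
  rw [max_eq_right hcd.le] at hB
  rcases descends_or_reaches_of_hEdge hR (Nat.zero_le j) with ⟨i, -, hi, hBc⟩ | hR₀
  · exact exits_before_of_right hcd hBc hB hi
  · have := le_exit_of_vEdge hB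
    rw [Fin.lt_def, exit_eq_of_hEdge_zero hR₀]
    omega

lemma crosses_of_adjacent {t j : ℕ} {c d : Fin r} (hcd : c < d)
    (hc : s.vEdge t (j + 1) = some c) (hd : s.vEdge t j = some d) : s.Crosses c d := by
  have ht := lt_of_vEdge_eq_some hc
  have hadm := s.admC_vEdge_hEdge t (j + 1)
  rcases admC.top_exits hadm hc with hR | hB
  · exact ⟨t, j, hR, hd⟩
  · -- `c` turns down and hands a colour `z ≤ c < d` to the right, which pushes `d` down too
    obtain ⟨z, hz⟩ := admC.exists_right_of_top_eq_bottom hadm hc hB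
    have hBd := (admC.cross (s.admC_vEdge_hEdge t j) hz hd).2
    rw [max_eq_right ((admC.right_le_top hadm hc hz).trans hcd.le)] at hBd
    exact crosses_of_adjacent hcd hB hBd
termination_by r - t

lemma crosses_of_exits_before {t ja jb : ℕ} {a b : Fin r} (hab : a < b) (hw : w a < w b)
    (ha : s.vEdge t ja = some a) (hb : s.vEdge t jb = some b) (hj : jb < ja) :
    s.Crosses a b := by
  have ht := lt_of_vEdge_eq_some ha
  rcases descends_or_reaches_of_vEdge ha (show jb + 1 ≤ ja from hj) with ⟨i, hi, -, hBa⟩ | hR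
  · rcases descends_or_exits hb with ⟨i', hi', hBb⟩ | hwb
    · exact crosses_of_exits_before hab hw hBa hBb (by omega)
    · have := le_exit_of_vEdge hBa
      rw [Fin.lt_def] at hw
      omega
  · exact ⟨t, jb, hR, hb⟩
termination_by r - t

lemma exits_before_of_lam_eq (s : CState r N lam w) (hlam : Antitone lam)
    (hN : ∀ c, topCol lam c ≤ N) {a b : Fin r} (hab : a < b) (h : lam a = lam b) :
    w a < w b := by
  refine strictMonoOn_of_lt_succ (Set.ordConnected_singleton.preimage_anti hlam)
    (fun c hc hc₁ hc₂ => ?_) (rfl : lam a = lam a) h.symm hab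
  have hlt : c < Order.succ c := Order.lt_succ_of_not_isMax hc
  have hcol : topCol lam (Order.succ c) + 1 = topCol lam c := by
    have := (Order.succ c).isLt
    unfold topCol
    rw [Fin.val_orderSucc_of_not_isMax hc] at this ⊢
    rw [show lam (Order.succ c) = lam c from hc₂.trans hc₁.symm]
    omega
  refine (crosses_of_adjacent hlt ?_ (vEdge_zero_topCol (s := s) (hN _))).exits_before hlt
  rw [hcol]
  exact vEdge_zero_topCol (hN c)

lemma Crosses.exists_H_V {a b : Fin r} (h : s.Crosses a b) :
    ∃ (row : Fin r) (col : Fin (N + 1)),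
      s.H row ⟨N - (col : ℕ), by omega⟩ = some a ∧ s.V row.castSucc col = some b := by
  obtain ⟨t, j, hL, hT⟩ := h
  have ht := lt_of_vEdge_eq_some hT
  have hj : j < N + 1 := by
    by_contra hj
    simp [vEdge, hj] at hT
  refine ⟨⟨t, ht⟩, ⟨j, hj⟩, ?_, ?_⟩
  · simpa [hEdge, ht, show j + 1 < N + 2 by omega, Nat.add_sub_add_right] using hL
  · simpa [vEdge, show t < r + 1 by omega, hj] using hT

end CState

/-- If a part of `λ` is repeated, `λ_i = λ_{i+1} = ⋯ = λ_j`, then in every admissible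
state of the colored model the colored lines entering through the top in the
corresponding consecutive columns must pairwise cross: for each pair of colours
`a < b` (so `c_a > c_b`) in the range `[i,j]`, there is a vertex at which the line of
colour `a` enters on the left and the line of colour `b` enters on the top (which is
exactly the configuration at which two lines cross).  Consequently, if the ensemble
`S_{z,λ,w}` is nonempty then `w` is the shortest element of its coset `w W_λ` in
`W/W_λ`, where `W_λ` is the stabilizer of `λ`. -/
theorem repeated_parts_cross (r N : ℕ) (hr : 0 < r) (lam : Fin r → ℕ)
    (hdom : ∀ i j : Fin r, i ≤ j → lam j ≤ lam i) (hN : lam ⟨0, hr⟩ + r - 1 ≤ N)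
    (w : Equiv.Perm (Fin r)) (i j : Fin r)
    (hrep : ∀ k : Fin r, i ≤ k → k ≤ j → lam k = lam i) :
    (∀ s : CState r N lam w, ∀ a b : Fin r, i ≤ a → a < b → b ≤ j →
      ∃ (row : Fin r) (col : Fin (N + 1)),
        s.H row ⟨N - (col : ℕ), by omega⟩ = some a ∧ s.V row.castSucc col = some b) ∧
    (Nonempty (CState r N lam w) →
      ∀ v : Equiv.Perm (Fin r), (∀ k, lam (v k) = lam k) → len r w ≤ len r (w * v)) := by
  have hcol : ∀ c : Fin r, topCol lam c ≤ N := fun c => by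
    have := hdom ⟨0, hr⟩ c (Fin.le_def.2 (Nat.zero_le _))
    unfold topCol
    omega
  refine ⟨fun s a b hia hab hbj => ?_, fun ⟨s⟩ v hv => ?_⟩
  · have hlam : lam a = lam b :=
      (hrep a hia (hab.le.trans hbj)).trans (hrep b (hia.trans hab.le) hbj).symm
    exact (CState.crosses_of_exits_before hab (s.exits_before_of_lam_eq hdom hcol hab hlam)
      (CState.vEdge_zero_topCol (hcol a)) (CState.vEdge_zero_topCol (hcol b))
      (topCol_lt_topCol hdom hab)).exists_H_V
  · exact len_le_len_mul_of_stabilizer hdom (fun a b => s.exits_before_of_lam_eq hdom hcol) hv
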